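/- Let K ≥ 1 and let φ, ψ ∈ ℂ³ with φ ≠ 0, h = φ·φ, and suppose the K-quasiconformality inequality ‖φ‖² ≤ ((K²+1)/(2K))·√(‖φ‖⁴ − |h|²) holds. Then |(φ̄ × φ)·ψ|² / (‖φ‖⁴ − |h|²)² ≤ ((K²+1)/(2K))⁴ · (‖ψ‖²‖φ‖² − |⟨ψ, φ⟩|²) / ‖φ‖⁶. (Taking ψ = φ', this is the pointwise curvature comparison |K_{ds²}| ≤ ((K²+1)/(2K))⁴·|K_Γ| between the curvature K_{ds²} = −|(φ̄×φ)·φ'|²/(‖φ‖⁴−|h|²)² of the induced metric and the curvature K_Γ = −(‖φ'‖²‖φ‖² − |⟨φ',φ⟩|²)/‖φ‖⁶ of the Klotz metric Γ = 2‖φ‖²|dz|², which is the key step in the proof of the Gauss curvature estimate for K-quasiconformal harmonic surfaces.) -/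

import Mathlib

/-- Hermitian square norm on `ℂ³`: `‖a‖² = Σᵢ |aᵢ|²`. -/
noncomputable def hnorm2 (a : Fin 3 → ℂ) : ℝ := ∑ i, ‖a i‖ ^ 2

/-- Hermitian inner product on `ℂ³`: `⟨a, b⟩ = Σᵢ aᵢ · conj(bᵢ)`. -/
noncomputable def hinner (a b : Fin 3 → ℂ) : ℂ := ∑ i, a i * (starRingEnd ℂ) (b i)

/-- The `ℂ`-bilinear dot product on `ℂ³`: `a·b = Σᵢ aᵢbᵢ`. -/
noncomputable def cdot (a b : Fin 3 → ℂ) : ℂ := ∑ i, a i * b i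

/-- The `ℂ`-bilinear cross product on `ℂ³`. -/
def ccross (a b : Fin 3 → ℂ) : Fin 3 → ℂ :=
  ![a 1 * b 2 - a 2 * b 1, a 2 * b 0 - a 0 * b 2, a 0 * b 1 - a 1 * b 0]

private lemma hnorm2_nonneg (a : Fin 3 → ℂ) : 0 ≤ hnorm2 a :=
  Finset.sum_nonneg fun _ _ => sq_nonneg _

private lemma hinner_self_eq (a : Fin 3 → ℂ) : hinner a a = (hnorm2 a : ℂ) := by
  simp only [hinner, hnorm2]
  rw [Complex.ofReal_sum]
  refine Finset.sum_congr rfl fun i _ => ?_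
  rw [Complex.mul_conj]
  norm_cast
  rw [Complex.sq_norm]

private noncomputable def Fmap (a : Fin 3 → ℂ) : EuclideanSpace ℂ (Fin 3) :=
  (WithLp.equiv 2 _).symm a

private lemma norm_Fmap_sq (a : Fin 3 → ℂ) : ‖Fmap a‖ ^ 2 = hnorm2 a := by
  rw [EuclideanSpace.norm_eq, Real.sq_sqrt (Finset.sum_nonneg fun _ _ => sq_nonneg _)]
  simp [Fmap, hnorm2, WithLp.equiv_symm_apply, PiLp.toLp_apply]

private lemma inner_Fmap (a b : Fin 3 → ℂ) : (inner ℂ (Fmap a) (Fmap b) : ℂ) = hinner b a := by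
  simp only [Fmap, PiLp.inner_apply, RCLike.inner_apply, WithLp.equiv_symm_apply, PiLp.toLp_apply, hinner]

private lemma cs_hinner (a b : Fin 3 → ℂ) :
    ‖hinner a b‖ ^ 2 ≤ hnorm2 a * hnorm2 b := by
  have h1 : ‖hinner a b‖ ≤ ‖Fmap b‖ * ‖Fmap a‖ := by
    rw [← inner_Fmap b a]
    exact norm_inner_le_norm _ _
  have h2 := mul_self_le_mul_self (norm_nonneg _) h1
  calc ‖hinner a b‖ ^ 2 ≤ (‖Fmap b‖ * ‖Fmap a‖) ^ 2 := by
        rw [sq, sq]; exact h2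
    _ = hnorm2 a * hnorm2 b := by
        rw [mul_pow, norm_Fmap_sq, norm_Fmap_sq]; ring

private lemma cs_cdot (a b : Fin 3 → ℂ) :
    ‖cdot a b‖ ^ 2 ≤ hnorm2 a * hnorm2 b := by
  have h0 : cdot a b = hinner b (fun i => (starRingEnd ℂ) (a i)) := by
    simp only [cdot, hinner, Complex.conj_conj]
    exact Finset.sum_congr rfl fun i _ => mul_comm _ _
  have h1 : hnorm2 (fun i => (starRingEnd ℂ) (a i)) = hnorm2 a := by
    simp [hnorm2]
  calc ‖cdot a b‖ ^ 2
      = ‖hinner b (fun i => (starRingEnd ℂ) (a i))‖ ^ 2 := by rw [h0]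
    _ ≤ hnorm2 b * hnorm2 (fun i => (starRingEnd ℂ) (a i)) := cs_hinner _ _
    _ = hnorm2 a * hnorm2 b := by rw [h1]; ring

private lemma cdot_ccross_self (φ : Fin 3 → ℂ) :
    cdot (ccross (fun j => (starRingEnd ℂ) (φ j)) φ) φ = 0 := by
  simp only [cdot, ccross, Fin.sum_univ_three, Matrix.cons_val_zero, Matrix.cons_val_one,
    Matrix.head_cons, Matrix.cons_val_two, Matrix.tail_cons]
  ring

private lemma hnorm2_ccross (φ : Fin 3 → ℂ) :
    hnorm2 (ccross (fun j => (starRingEnd ℂ) (φ j)) φ)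
      = hnorm2 φ ^ 2 - ‖cdot φ φ‖ ^ 2 := by
  set n := ccross (fun j => (starRingEnd ℂ) (φ j)) φ with hn
  have key : hinner n n = hinner φ φ ^ 2 - cdot φ φ * (starRingEnd ℂ) (cdot φ φ) := by
    simp only [hn, hinner, cdot, ccross, Fin.sum_univ_three, Matrix.cons_val_zero,
      Matrix.cons_val_one, Matrix.head_cons, Matrix.cons_val_two, Matrix.tail_cons,
      map_add, map_sub, map_mul, Complex.conj_conj]
    ring
  have h2 : hinner n n = ((hnorm2 φ ^ 2 - ‖cdot φ φ‖ ^ 2 : ℝ) : ℂ) := by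
    rw [key, hinner_self_eq, Complex.mul_conj, Complex.sq_norm]
    push_cast
    ring
  have := (hinner_self_eq n).symm.trans h2
  exact_mod_cast this

private lemma hnorm2_proj (φ ψ : Fin 3 → ℂ) :
    hnorm2 (fun i => (hnorm2 φ : ℂ) * ψ i - hinner ψ φ * φ i)
      = hnorm2 φ * (hnorm2 ψ * hnorm2 φ - ‖hinner ψ φ‖ ^ 2) := by
  set ψ' : Fin 3 → ℂ := fun i => (hnorm2 φ : ℂ) * ψ i - hinner ψ φ * φ i with hψ'
  have key : hinner ψ' ψ'
      = hinner φ φ * (hinner φ φ * hinner ψ ψ - hinner ψ φ * (starRingEnd ℂ) (hinner ψ φ)) := by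
    simp only [hψ', ← hinner_self_eq, hinner, Fin.sum_univ_three, map_add, map_sub, map_mul,
      Complex.conj_conj]
    ring
  have h2 : hinner ψ' ψ'
      = ((hnorm2 φ * (hnorm2 ψ * hnorm2 φ - ‖hinner ψ φ‖ ^ 2) : ℝ) : ℂ) := by
    rw [key, hinner_self_eq, hinner_self_eq, Complex.mul_conj, Complex.sq_norm]
    push_cast
    ring
  have := (hinner_self_eq ψ').symm.trans h2
  exact_mod_cast this

private lemma cdot_proj (φ ψ : Fin 3 → ℂ) :
    cdot (ccross (fun j => (starRingEnd ℂ) (φ j)) φ)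
        (fun i => (hnorm2 φ : ℂ) * ψ i - hinner ψ φ * φ i)
      = (hnorm2 φ : ℂ) * cdot (ccross (fun j => (starRingEnd ℂ) (φ j)) φ) ψ := by
  have h0 := cdot_ccross_self φ
  simp only [cdot, ccross, Fin.sum_univ_three, Matrix.cons_val_zero, Matrix.cons_val_one,
    Matrix.head_cons, Matrix.cons_val_two, Matrix.tail_cons] at h0 ⊢
  linear_combination (-(hinner ψ φ)) * h0

/-- Pointwise curvature comparison for `K`-quasiconformal harmonic surfaces:
if `K ≥ 1`, `φ ≠ 0`, `h = φ·φ` and `‖φ‖² ≤ ((K²+1)/(2K))√(‖φ‖⁴ − |h|²)`, then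
`|(φ̄ × φ)·ψ|²/(‖φ‖⁴ − |h|²)² ≤ ((K²+1)/(2K))⁴·(‖ψ‖²‖φ‖² − |⟨ψ,φ⟩|²)/‖φ‖⁶`. -/
theorem curvature_comparison (K : ℝ) (hK : 1 ≤ K)
    (φ ψ : Fin 3 → ℂ) (hφne : φ ≠ 0)
    (h : ℂ) (hh : h = cdot φ φ)
    (hQC : hnorm2 φ
        ≤ ((K ^ 2 + 1) / (2 * K)) *
            Real.sqrt ((hnorm2 φ) ^ 2 - ‖h‖ ^ 2)) :
    ‖cdot (ccross (fun j => (starRingEnd ℂ) (φ j)) φ) ψ‖ ^ 2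
        / ((hnorm2 φ) ^ 2 - ‖h‖ ^ 2) ^ 2
      ≤ ((K ^ 2 + 1) / (2 * K)) ^ 4 *
          (hnorm2 ψ * hnorm2 φ - ‖hinner ψ φ‖ ^ 2) / (hnorm2 φ) ^ 3 := by
  subst hh
  have hKpos : (0:ℝ) < K := lt_of_lt_of_le one_pos hK
  set c : ℝ := (K ^ 2 + 1) / (2 * K) with hc
  have hc1 : 1 ≤ c := by
    rw [hc, le_div_iff₀ (by positivity)]
    nlinarith
  have hcpos : (0:ℝ) < c := lt_of_lt_of_le one_pos hc1
  set P := hnorm2 φ with hPdef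
  have hPpos : 0 < P := by
    rcases Function.ne_iff.mp hφne with ⟨i, hi⟩
    have h1 : 0 < ‖φ i‖ ^ 2 :=
      pow_pos (norm_pos_iff.mpr hi) 2
    exact lt_of_lt_of_le h1 (Finset.single_le_sum
      (f := fun j => ‖φ j‖ ^ 2) (fun j _ => sq_nonneg _) (Finset.mem_univ i))
  set D := P ^ 2 - ‖cdot φ φ‖ ^ 2 with hDdef
  have hsqrt : 0 < Real.sqrt D := by
    by_contra hle
    push_neg at hle
    have h0 : Real.sqrt D = 0 := le_antisymm hle (Real.sqrt_nonneg _)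
    rw [h0, mul_zero] at hQC
    exact absurd hQC (not_le.mpr hPpos)
  have hDpos : 0 < D := Real.sqrt_pos.mp hsqrt
  have hP2 : P ^ 2 ≤ c ^ 2 * D := by
    have h1 : P ^ 2 ≤ (c * Real.sqrt D) ^ 2 := pow_le_pow_left₀ hPpos.le hQC 2
    rwa [mul_pow, Real.sq_sqrt hDpos.le] at h1
  set n := ccross (fun j => (starRingEnd ℂ) (φ j)) φ with hn
  set t := hinner ψ φ with ht
  set N := hnorm2 ψ * P - ‖t‖ ^ 2 with hNdef
  have hNnn : 0 ≤ N := by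
    have := cs_hinner ψ φ
    simp only [hNdef, ht, hPdef]
    linarith
  set A := ‖cdot n ψ‖ with hA
  -- key Cauchy-Schwarz estimate: P^2 * A^2 ≤ D * (P * N)
  have hkey : P ^ 2 * A ^ 2 ≤ D * (P * N) := by
    have hcs := cs_cdot n (fun i => (P : ℂ) * ψ i - t * φ i)
    rw [hn, cdot_proj φ ψ, hnorm2_ccross φ, hnorm2_proj φ ψ, norm_mul, mul_pow] at hcs
    simp only [Complex.norm_real, Real.norm_eq_abs, abs_of_pos hPpos] at hcs
    rw [← hn, ← hPdef, ← ht, ← hA, ← hDdef, ← hNdef] at hcs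
    rwa [abs_of_pos hPpos] at hcs
  rw [div_le_div_iff₀ (by positivity) (by positivity)]
  have hc24 : c ^ 2 ≤ c ^ 4 := by nlinarith
  nlinarith [mul_le_mul_of_nonneg_right hkey hPpos.le,
    mul_le_mul_of_nonneg_left hP2 (mul_nonneg hNnn hDpos.le),
    mul_le_mul_of_nonneg_right hc24 (mul_nonneg (mul_nonneg hNnn hDpos.le) hDpos.le),
    sq_nonneg A, hDpos.le, hPpos.le]
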